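/- Let m ≥ 1 and N ≥ 1, let λ, μ, ξ, α ∈ ℝ^m have strictly positive entries, and let Q be an m×m real matrix with nonnegative off-diagonal entries and zero row sums; write q_z = −Q_{zz}, d_β = q+λ+μ+ξ, d_γ = q+λ+α. With S̃* = [[0, I_m, 0], [0, Δ(d_β)^{-1}(Δ(λ+q)+Q), Δ(d_β)^{-1}Δ(ξ)], [Δ(d_γ)^{-1}Δ(α), 0, Δ(d_γ)^{-1}(Δ(λ+q)+Q)]] and M̃ the 3m×3m matrix with single nonzero block Δ(d_β)^{-1}Δ(μ) at (β,ι), let Ã* be the 3mN × 3mN block matrix whose (i,j) block (i,j ∈ ℤ/N) equals S̃* if j = i and equals M̃ if j ≡ i − 1 (mod N), and is zero otherwise. Then Ã* has all entries nonnegative and every row sum equal to 1 (i.e., Ã* is row-stochastic). -/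
import Mathlib


open Matrix

/-- Assemble a 3×3 array of m×m blocks into a 3m×3m matrix. -/
noncomputable def blk3 {m : ℕ} (A : Fin 3 → Fin 3 → Matrix (Fin m) (Fin m) ℝ) :
    Matrix (Fin 3 × Fin m) (Fin 3 × Fin m) ℝ :=
  fun p q => A p.1 q.1 p.2 q.2

/-- The limiting within-level jump-chain block `S̃*`, with
`d_β = q+λ+μ+ξ` and `d_γ = q+λ+α`. -/
noncomputable def SStar {m : ℕ} (la mu xi al q : Fin m → ℝ)
    (Q : Matrix (Fin m) (Fin m) ℝ) :
    Matrix (Fin 3 × Fin m) (Fin 3 × Fin m) ℝ :=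
  blk3 ![![0, 1, 0],
         ![0, (diagonal (fun z => q z + la z + mu z + xi z))⁻¹
                * (diagonal (fun z => la z + q z) + Q),
              (diagonal (fun z => q z + la z + mu z + xi z))⁻¹ * diagonal xi],
         ![(diagonal (fun z => q z + la z + al z))⁻¹ * diagonal al, 0,
              (diagonal (fun z => q z + la z + al z))⁻¹
                * (diagonal (fun z => la z + q z) + Q)]]

/-- The limiting inventory-decrement block `M̃`: single nonzero block
`Δ(d_β)⁻¹ Δ(μ)` at position `(β, ι)`. -/
noncomputable def MTilde {m : ℕ} (la mu xi q : Fin m → ℝ) :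
    Matrix (Fin 3 × Fin m) (Fin 3 × Fin m) ℝ :=
  blk3 ![![0, 0, 0],
         ![(diagonal (fun z => q z + la z + mu z + xi z))⁻¹ * diagonal mu, 0, 0],
         ![0, 0, 0]]

/-- The 3mN×3mN block-circulant matrix whose `(i,j)` block is `S` when `j = i`,
`M` when `j ≡ i − 1 (mod N)`, and zero otherwise. -/
noncomputable def AStar {ι : Type*} {N : ℕ} (S M : Matrix ι ι ℝ) :
    Matrix (Fin N × ι) (Fin N × ι) ℝ :=
  fun p q =>
    (if q.1 = p.1 then S p.2 q.2 else 0)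
      + (if ((q.1 : ℕ) + 1) % N = (p.1 : ℕ) then M p.2 q.2 else 0)

lemma stmt7_diag_inv {m : ℕ} (d : Fin m → ℝ) (hd : ∀ z, d z ≠ 0) :
    (diagonal d)⁻¹ = diagonal (fun z => (d z)⁻¹) := by
  apply Matrix.inv_eq_right_inv
  rw [Matrix.diagonal_mul_diagonal]
  simp [mul_inv_cancel₀, hd, Matrix.diagonal_one]

lemma stmt7_dinv_mul_apply {m : ℕ} (d : Fin m → ℝ) (hd : ∀ z, d z ≠ 0)
    (A : Matrix (Fin m) (Fin m) ℝ) (z z' : Fin m) :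
    ((diagonal d)⁻¹ * A) z z' = (d z)⁻¹ * A z z' := by
  rw [stmt7_diag_inv d hd, Matrix.diagonal_mul]

lemma stmt7_diag_row_sum {m : ℕ} (v : Fin m → ℝ) (z : Fin m) :
    ∑ z', diagonal v z z' = v z := by
  simp [Matrix.diagonal_apply, Finset.sum_ite_eq]

/-- The limiting jump-chain matrix `Ã*` of the (s,S)
inventory LDQBD, built from `S̃*` and `M̃` over the `N = S − s` inventory
levels, is row-stochastic. -/
theorem stmt_7 (m N : ℕ) (hm : 1 ≤ m) (hN : 1 ≤ N)
    (la mu xi al : Fin m → ℝ)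
    (hla : ∀ z, 0 < la z) (hmu : ∀ z, 0 < mu z) (hxi : ∀ z, 0 < xi z)
    (hal : ∀ z, 0 < al z)
    (Q : Matrix (Fin m) (Fin m) ℝ)
    (hQoff : ∀ z z', z ≠ z' → 0 ≤ Q z z')
    (hQrow : ∀ z, ∑ z', Q z z' = 0)
    (q : Fin m → ℝ) (hq : ∀ z, q z = -Q z z) :
    (∀ i j, 0 ≤ (AStar (N := N) (SStar la mu xi al q Q) (MTilde la mu xi q)) i j) ∧
    (∀ i, ∑ j,
      (AStar (N := N) (SStar la mu xi al q Q) (MTilde la mu xi q)) i j = 1) := by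
  -- q is nonnegative
  have hq0 : ∀ z, 0 ≤ q z := by
    intro z
    have h1 : Q z z + ∑ z' ∈ Finset.univ.erase z, Q z z' = 0 := by
      rw [Finset.add_sum_erase _ _ (Finset.mem_univ z)]; exact hQrow z
    have h2 : 0 ≤ ∑ z' ∈ Finset.univ.erase z, Q z z' :=
      Finset.sum_nonneg fun z' hz' => hQoff z z' (Ne.symm (Finset.ne_of_mem_erase hz'))
    rw [hq]; linarith
  have hdβ' : ∀ z, q z + la z + mu z + xi z ≠ 0 := fun z => by
    have := hq0 z; have := hla z; have := hmu z; have := hxi z; positivity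
  have hdγ' : ∀ z, q z + la z + al z ≠ 0 := fun z => by
    have := hq0 z; have := hla z; have := hal z; positivity
  have hdβnn : ∀ z, 0 ≤ (q z + la z + mu z + xi z)⁻¹ := fun z => by
    have := hq0 z; have := hla z; have := hmu z; have := hxi z; positivity
  have hdγnn : ∀ z, 0 ≤ (q z + la z + al z)⁻¹ := fun z => by
    have := hq0 z; have := hla z; have := hal z; positivity
  -- entries of (diagonal (λ+q) + Q) are nonnegative
  have hLQ : ∀ z z', 0 ≤ (diagonal (fun z => la z + q z) + Q) z z' := by
    intro z z'
    rcases eq_or_ne z z' with h | h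
    · subst h
      simp only [Matrix.add_apply, Matrix.diagonal_apply_eq]
      have := hla z; have h3 := hq z; linarith [hq0 z]
    · simp only [Matrix.add_apply, Matrix.diagonal_apply_ne _ h]
      simpa using hQoff z z' h
  -- row sums of (diagonal (λ+q) + Q)
  have hLQrow : ∀ z, ∑ z', (diagonal (fun z => la z + q z) + Q) z z' = la z + q z := by
    intro z
    simp only [Matrix.add_apply, Finset.sum_add_distrib, hQrow]
    simp [Matrix.diagonal_apply, Finset.sum_ite_eq]
  -- nonnegativity of SStar entries
  have hSnn : ∀ p r, 0 ≤ SStar la mu xi al q Q p r := by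
    rintro ⟨a, z⟩ ⟨b, z'⟩
    fin_cases a <;> fin_cases b <;> simp [SStar, blk3, Matrix.vecHead, Matrix.vecTail]
    · rw [Matrix.one_apply]; split <;> norm_num
    · rw [stmt7_dinv_mul_apply _ hdβ']
      exact mul_nonneg (hdβnn z) (hLQ z z')
    · rw [stmt7_diag_inv _ hdβ', Matrix.diagonal_apply]
      exact mul_nonneg (by split <;> [exact hdβnn z; exact le_refl 0]) (hxi z').le
    · rw [stmt7_diag_inv _ hdγ', Matrix.diagonal_apply]
      exact mul_nonneg (by split <;> [exact hdγnn z; exact le_refl 0]) (hal z').le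
    · rw [stmt7_dinv_mul_apply _ hdγ']
      exact mul_nonneg (hdγnn z) (hLQ z z')
  -- nonnegativity of MTilde entries
  have hMnn : ∀ p r, 0 ≤ MTilde la mu xi q p r := by
    rintro ⟨a, z⟩ ⟨b, z'⟩
    fin_cases a <;> fin_cases b <;> simp [MTilde, blk3, Matrix.vecHead, Matrix.vecTail]
    rw [stmt7_diag_inv _ hdβ', Matrix.diagonal_apply]
    exact mul_nonneg (by split <;> [exact hdβnn z; exact le_refl 0]) (hmu z').le
  -- block row-sum computations
  have hBsum : ∀ z, ∑ z', ((diagonal (fun z => q z + la z + mu z + xi z))⁻¹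
      * (diagonal (fun z => la z + q z) + Q)) z z'
      = (q z + la z + mu z + xi z)⁻¹ * (la z + q z) := by
    intro z
    simp only [stmt7_dinv_mul_apply _ hdβ', ← Finset.mul_sum, hLQrow]
  have hGsum : ∀ z, ∑ z', ((diagonal (fun z => q z + la z + al z))⁻¹
      * (diagonal (fun z => la z + q z) + Q)) z z'
      = (q z + la z + al z)⁻¹ * (la z + q z) := by
    intro z
    simp only [stmt7_dinv_mul_apply _ hdγ', ← Finset.mul_sum, hLQrow]
  have hdot : ∀ (d v : Fin m → ℝ), (∀ z, d z ≠ 0) → ∀ z : Fin m,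
      ∑ x, (diagonal d)⁻¹ z x * v x = (d z)⁻¹ * v z := by
    intro d v hd z
    rw [stmt7_diag_inv _ hd]
    simp [Matrix.diagonal_apply, ite_mul, Finset.sum_ite_eq]
  have hξsum := fun z => hdot _ xi hdβ' z
  have hμsum := fun z => hdot _ mu hdβ' z
  have hαsum := fun z => hdot _ al hdγ' z
  -- row sums of SStar + MTilde
  have hSMrow : ∀ p, (∑ r, SStar la mu xi al q Q p r)
      + (∑ r, MTilde la mu xi q p r) = 1 := by
    rintro ⟨a, z⟩
    rw [Fintype.sum_prod_type, Fintype.sum_prod_type,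
      Fin.sum_univ_three, Fin.sum_univ_three]
    fin_cases a <;> simp [SStar, MTilde, blk3, Matrix.vecHead, Matrix.vecTail]
    · simp [Matrix.one_apply, Finset.sum_ite_eq]
    · rw [hBsum, hξsum, hμsum]
      field_simp [hdβ' z]
      ring
    · rw [hGsum, hαsum]
      field_simp [hdγ' z]
      ring
  constructor
  · rintro ⟨i1, i2⟩ ⟨j1, j2⟩
    refine add_nonneg ?_ ?_
    · dsimp only
      split
      · exact hSnn _ _
      · exact le_refl 0
    · dsimp only
      split
      · exact hMnn _ _
      · exact le_refl 0
  · rintro ⟨i1, i2⟩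
    obtain ⟨n, rfl⟩ : ∃ n, N = n + 1 := ⟨N - 1, by omega⟩
    rw [Fintype.sum_prod_type]
    have hval : ∀ j1 : Fin (n + 1), ((j1 + 1 : Fin (n + 1)) : ℕ)
        = ((j1 : ℕ) + 1) % (n + 1) := by
      intro j1
      rw [Fin.add_def, Fin.val_one']
      conv_rhs => rw [Nat.add_mod]
      rw [Nat.mod_eq_of_lt j1.isLt]
    have key : ∀ j1 : Fin (n + 1),
        ((((j1 : ℕ) + 1) % (n + 1) = (i1 : ℕ)) ↔ j1 = i1 - 1) := by
      intro j1
      rw [← hval j1, eq_sub_iff_add_eq]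
      exact ⟨fun h => Fin.ext h, fun h => congrArg Fin.val h⟩
    have hsplit : ∀ j1 : Fin (n + 1), ∑ j2 : Fin 3 × Fin m,
        (AStar (SStar la mu xi al q Q) (MTilde la mu xi q) (i1, i2) (j1, j2))
        = (if j1 = i1 then ∑ j2, SStar la mu xi al q Q i2 j2 else 0)
          + (if j1 = i1 - 1 then ∑ j2, MTilde la mu xi q i2 j2 else 0) := by
      intro j1
      unfold AStar
      rw [Finset.sum_add_distrib]
      congr 1
      · split <;> simp
      · simp only [key]
        split <;> simp
    calc ∑ j1, ∑ j2, AStar (SStar la mu xi al q Q) (MTilde la mu xi q) (i1, i2) (j1, j2)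
        = ∑ j1 : Fin (n + 1),
            ((if j1 = i1 then ∑ j2, SStar la mu xi al q Q i2 j2 else 0)
             + (if j1 = i1 - 1 then ∑ j2, MTilde la mu xi q i2 j2 else 0)) :=
          Finset.sum_congr rfl fun j1 _ => hsplit j1
      _ = (∑ j2, SStar la mu xi al q Q i2 j2) + (∑ j2, MTilde la mu xi q i2 j2) := by
          rw [Finset.sum_add_distrib]
          congr 1 <;> simp [Finset.sum_ite_eq']
      _ = 1 := hSMrow i2
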